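/- For every integer n ≥ 2, A(n) = 16^n − Σ_{r=0}^{n−2} v(r) − Σ_{r=0}^{n} v(r). -/
import Mathlib


/-- The integer sequence `v`: `v(0)=1`, `v(1)=14`, `v(2)=224`, and for `m ≥ 2`,
`v(m+1) = 16·v(m) − v(m−1)`. -/
def vseq : ℕ → ℤ
  | 0 => 1
  | 1 => 14
  | 2 => 224
  | (m + 3) => 16 * vseq (m + 2) - vseq (m + 1)

/-- The pair `(A(n), B(n))` of integer sequences: `A(1)=1`, `B(1)=0`, `A(2)=16`,
`B(2)=1`, and for `n ≥ 3`, `A(n) = 16·(A(n−1) + B(n−1))` and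
`B(n) = 16^(n−2) − A(n−2) − B(n−2)`.  (The value at `0` is junk.) -/
def ABseq : ℕ → ℤ × ℤ
  | 0 => (0, 0)
  | 1 => (1, 0)
  | 2 => (16, 1)
  | (m + 3) =>
      (16 * ((ABseq (m + 2)).1 + (ABseq (m + 2)).2),
       16 ^ (m + 1) - (ABseq (m + 1)).1 - (ABseq (m + 1)).2)

/-- The sequence `A`. -/
def Aseq (n : ℕ) : ℤ := (ABseq n).1

/-- The sequence `B`. -/
def Bseq (n : ℕ) : ℤ := (ABseq n).2

/-- Partial sums of `v`. -/
def Sv (k : ℕ) : ℤ := ∑ r ∈ Finset.range k, vseq r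

lemma Sv_succ (k : ℕ) : Sv (k + 1) = Sv k + vseq k := Finset.sum_range_succ _ _

lemma key_v : ∀ m : ℕ, vseq (m + 2) - vseq (m + 1) = 14 * Sv (m + 2) := by
  intro m
  induction m with
  | zero => simp [vseq, Sv, Finset.sum_range_succ]
  | succ k ih =>
      have h1 : vseq (k + 3) = 16 * vseq (k + 2) - vseq (k + 1) := rfl
      rw [h1, Sv_succ]
      linarith [ih]

lemma key_AB : ∀ m : ℕ,
    (Aseq (m + 2) = 16 ^ (m + 2) - Sv (m + 1) - Sv (m + 3) ∧
      Bseq (m + 2) = Sv (m + 1)) ∧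
    (Aseq (m + 3) = 16 ^ (m + 3) - Sv (m + 2) - Sv (m + 4) ∧
      Bseq (m + 3) = Sv (m + 2)) := by
  intro m
  induction m with
  | zero =>
      refine ⟨⟨?_, ?_⟩, ?_, ?_⟩ <;>
        simp [Aseq, Bseq, ABseq, Sv, Finset.sum_range_succ, vseq]
  | succ k ih =>
      obtain ⟨⟨hA2, hB2⟩, hA3, hB3⟩ := ih
      refine ⟨⟨hA3, hB3⟩, ?_, ?_⟩
      · have hA : Aseq (k + 4) = 16 * (Aseq (k + 3) + Bseq (k + 3)) := rfl
        have hv := key_v (k + 2)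
        have h5 : Sv (k + 5) = Sv (k + 4) + vseq (k + 4) := Sv_succ _
        have h4 : Sv (k + 4) = Sv (k + 3) + vseq (k + 3) := Sv_succ _
        have hv4 := key_v (k + 2)
        -- 14 * Sv (k+4) = vseq (k+4) - vseq (k+3)
        have hv4' : vseq (k + 4) - vseq (k + 3) = 14 * Sv (k + 4) := key_v (k + 2)
        rw [hA, hA3, hB3]
        have hp : (16 : ℤ) ^ (k + 4) = 16 * 16 ^ (k + 3) := by ring
        rw [hp]
        linarith [hv4', h5, h4]
      · have hB : Bseq (k + 4) = 16 ^ (k + 2) - Aseq (k + 2) - Bseq (k + 2) := rfl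
        rw [hB, hA2, hB2]
        ring

/-- For every integer `n ≥ 2`,
`A(n) = 16^n − Σ_{r=0}^{n−2} v(r) − Σ_{r=0}^{n} v(r)`. -/
theorem Aseq_eq (n : ℕ) (hn : 2 ≤ n) :
    Aseq n = 16 ^ n - (∑ r ∈ Finset.range (n - 1), vseq r) -
      ∑ r ∈ Finset.range (n + 1), vseq r := by
  obtain ⟨m, rfl⟩ := Nat.exists_eq_add_of_le hn
  have h := (key_AB m).1.1
  have he : 2 + m = m + 2 := by omega
  rw [he]
  simpa [Sv, Nat.add_sub_cancel] using h
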